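/- Let 𝓘 be an interval system whose overlap graph has clique number ω ≥ 2, let (P, ≺, c) be a pillar assignment whose maximum degree is at most ω + ⌈log₂ ω⌉ + 1, let S = (p⁻, p⁺) be a segment of P containing an interval I ∈ 𝓘, and let P₁ be the set of pillars p ∈ P to which some interval with an endpoint in S is assigned. Then there exists a set P* ⊂ S of at most ω² − 1 pillars of 𝓘 such that I contains a pillar in P* and the P₁-degree of each segment of P ∪ P* contained in S is at most ω + 8. -/

import Mathlib

open scoped Classical

/-- Two open intervals `(a,b)`, `(c,d)` overlap: they intersect and neither
contains the other. -/
def Overlap (I J : ℝ × ℝ) : Prop :=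
  (I.1 < J.1 ∧ J.1 < I.2 ∧ I.2 < J.2) ∨ (J.1 < I.1 ∧ I.1 < J.2 ∧ J.2 < I.2)

/-- An interval system: a finite set of open subintervals of `(0,1)` (encoded by
their endpoint pairs) such that no interval has `0` or `1` as an endpoint and no
two distinct intervals share an endpoint. -/
structure IsIntervalSystem (𝓘 : Finset (ℝ × ℝ)) : Prop where
  mem_Ioo : ∀ I ∈ 𝓘, 0 < I.1 ∧ I.1 < I.2 ∧ I.2 < 1
  ends_distinct : ∀ I ∈ 𝓘, ∀ J ∈ 𝓘, I ≠ J →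
    I.1 ≠ J.1 ∧ I.1 ≠ J.2 ∧ I.2 ≠ J.1 ∧ I.2 ≠ J.2

/-- The overlap graph of an interval system. -/
def overlapGraph (𝓘 : Finset (ℝ × ℝ)) : SimpleGraph {I // I ∈ 𝓘} where
  Adj I J := Overlap I.1 J.1
  symm := by constructor; intro I J h; unfold Overlap at *; tauto
  loopless := by constructor; intro I h; rcases h with ⟨h1, _, _⟩ | ⟨h1, _, _⟩ <;> linarith

/-- A pillar of an interval system: a point of `(0,1)` that is not an endpoint
of any interval. -/
def IsPillar (𝓘 : Finset (ℝ × ℝ)) (p : ℝ) : Prop :=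
  0 < p ∧ p < 1 ∧ ∀ I ∈ 𝓘, p ≠ I.1 ∧ p ≠ I.2

/-- A circle graph: a graph isomorphic to the overlap graph of an interval
system. -/
def IsCircleGraph {V : Type*} (G : SimpleGraph V) : Prop :=
  ∃ 𝓘 : Finset (ℝ × ℝ), IsIntervalSystem 𝓘 ∧ Nonempty (G ≃g overlapGraph 𝓘)

/-- A permutation graph: a graph isomorphic to the overlap graph of an interval
system admitting a pillar contained in every interval. -/
def IsPermutationGraph {V : Type*} (G : SimpleGraph V) : Prop :=
  ∃ 𝓘 : Finset (ℝ × ℝ), IsIntervalSystem 𝓘 ∧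
    (∃ p, IsPillar 𝓘 p ∧ ∀ I ∈ 𝓘, I.1 < p ∧ p < I.2) ∧
    Nonempty (G ≃g overlapGraph 𝓘)

/-- `I` is assigned to pillar `p` with respect to the pillar set `P` and the
total order on `P` given by the ranking function `r` (injective on `P`): `p` is
the `r`-least pillar of `P` contained in `I`. -/
def AssignedTo (P : Finset ℝ) (r : ℝ → ℕ) (I : ℝ × ℝ) (p : ℝ) : Prop :=
  p ∈ P ∧ I.1 < p ∧ p < I.2 ∧
    ∀ q ∈ P, I.1 < q → q < I.2 → q ≠ p → r p < r q

/-- A pillar assignment `(P, ≺, c)`: a finite set of pillars `P`, a total order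
on `P` (encoded by a ranking `r` injective on `P`), and a colouring `c` such
that overlapping intervals assigned to pillars of the same colour are assigned
to the same pillar. -/
structure IsPillarAssignment (𝓘 : Finset (ℝ × ℝ)) (P : Finset ℝ) (r : ℝ → ℕ)
    (c : ℝ → ℕ) : Prop where
  pillar : ∀ p ∈ P, IsPillar 𝓘 p
  inj : Set.InjOn r ↑P
  colour : ∀ I₁ ∈ 𝓘, ∀ I₂ ∈ 𝓘, Overlap I₁ I₂ → ∀ p₁ p₂,
    AssignedTo P r I₁ p₁ → AssignedTo P r I₂ p₂ → c p₁ = c p₂ → p₁ = p₂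

/-- A pillar assignment is complete if every interval contains a pillar of `P`. -/
def IsCompleteAssignment (𝓘 : Finset (ℝ × ℝ)) (P : Finset ℝ) : Prop :=
  ∀ I ∈ 𝓘, ∃ p ∈ P, I.1 < p ∧ p < I.2

/-- `(s,t)` is a segment of the finite set `Q ⊆ (0,1)`: a maximal open
subinterval of `(0,1) \ Q`. -/
def IsSegment (Q : Finset ℝ) (s t : ℝ) : Prop :=
  (s ∈ Q ∨ s = 0) ∧ (t ∈ Q ∨ t = 1) ∧ s < t ∧ ∀ q ∈ Q, q ≤ s ∨ t ≤ q

/-- The `P`-degree of `(p₁,p₂)`: the number of pairs of segments `(S₁, S₂)`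
with `S₁` a segment of `P` disjoint from `(p₁,p₂)`, `S₂` a segment of
`P ∪ {p₁,p₂}` contained in `(p₁,p₂)`, such that some interval of `𝓘` has one
endpoint in `S₁` and one endpoint in `S₂`. -/
noncomputable def PDeg (𝓘 : Finset (ℝ × ℝ)) (P : Finset ℝ) (p₁ p₂ : ℝ) : ℕ :=
  Set.ncard {x : (ℝ × ℝ) × (ℝ × ℝ) |
    IsSegment P x.1.1 x.1.2 ∧ (x.1.2 ≤ p₁ ∨ p₂ ≤ x.1.1) ∧
    IsSegment (P ∪ {p₁, p₂}) x.2.1 x.2.2 ∧ p₁ ≤ x.2.1 ∧ x.2.2 ≤ p₂ ∧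
    ∃ I ∈ 𝓘,
      (x.1.1 < I.1 ∧ I.1 < x.1.2 ∧ x.2.1 < I.2 ∧ I.2 < x.2.2) ∨
      (x.2.1 < I.1 ∧ I.1 < x.2.2 ∧ x.1.1 < I.2 ∧ I.2 < x.1.2)}

/-- The `(P,≺)`-degree of an open interval `(a,b)` contained in a segment of
`P`: the number of pillars `p ∈ P` such that some interval of `𝓘` with an
endpoint in `(a,b)` is assigned to `p`. -/
noncomputable def PrecDeg (𝓘 : Finset (ℝ × ℝ)) (P : Finset ℝ) (r : ℝ → ℕ)
    (a b : ℝ) : ℕ :=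
  Set.ncard {p : ℝ | ∃ I ∈ 𝓘,
    ((a < I.1 ∧ I.1 < b) ∨ (a < I.2 ∧ I.2 < b)) ∧ AssignedTo P r I p}

/-- The maximum degree of `(P,≺)` is at most `D`: every segment of `P` has
`(P,≺)`-degree at most `D`. -/
def MaxDegLE (𝓘 : Finset (ℝ × ℝ)) (P : Finset ℝ) (r : ℝ → ℕ) (D : ℕ) : Prop :=
  ∀ s t : ℝ, IsSegment P s t → PrecDeg 𝓘 P r s t ≤ D

/-- A graph is perfect if every induced subgraph has chromatic number equal to
its clique number. -/
def IsPerfect {V : Type*} (G : SimpleGraph V) : Prop :=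
  ∀ s : Set V, (G.induce s).chromaticNumber = ((G.induce s).cliqueNum : ℕ∞)

/-- In any nonempty open real interval we can find a point avoiding a finite set. -/
lemma exists_between_avoid (a b : ℝ) (F : Finset ℝ) (h : a < b) :
    ∃ x, a < x ∧ x < b ∧ x ∉ F := by
  have h2 : ((Set.Ioo a b) \ ↑F).Infinite :=
    (Set.Ioo_infinite h).diff F.finite_toSet
  obtain ⟨x, hx⟩ := h2.nonempty
  exact ⟨x, hx.1.1, hx.1.2, fun hc => hx.2 (by simpa using hc)⟩

/-- Two segments of `Q` sharing an interior point coincide. -/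
lemma seg_eq_of_mem {Q : Finset ℝ} {x y x' y' w : ℝ}
    (hQ0 : ∀ q ∈ Q, 0 < q) (hQ1 : ∀ q ∈ Q, q < 1)
    (h1 : IsSegment Q x y) (h2 : IsSegment Q x' y')
    (ha : x < w) (hb : w < y) (ha' : x' < w) (hb' : w < y') : x = x' ∧ y = y' := by
  obtain ⟨hx1, hy1, hxy1, hq1⟩ := h1
  obtain ⟨hx2, hy2, hxy2, hq2⟩ := h2
  constructor
  · rcases lt_trichotomy x x' with hlt | heq | hgt
    · rcases hx2 with hx2 | hx2
      · rcases hq1 x' hx2 with h | h <;> linarith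
      · rcases hx1 with hx1 | hx1
        · have := hQ0 x hx1; linarith
        · linarith
    · exact heq
    · rcases hx1 with hx1 | hx1
      · rcases hq2 x hx1 with h | h <;> linarith
      · rcases hx2 with hx2 | hx2
        · have := hQ0 x' hx2; linarith
        · linarith
  · rcases lt_trichotomy y y' with hlt | heq | hgt
    · rcases hy1 with hy1 | hy1
      · rcases hq2 y hy1 with h | h <;> linarith
      · rcases hy2 with hy2 | hy2
        · have := hQ1 y' hy2; linarith
        · linarith
    · exact heq
    · rcases hy2 with hy2 | hy2
      · rcases hq1 y' hy2 with h | h <;> linarith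
      · rcases hy1 with hy1 | hy1
        · have := hQ1 y hy1; linarith
        · linarith

/-! ### Abstract Mirsky-type counting lemma -/

/-- The comparability relation on cells `(block, side, key)`. -/
def MRel (a b : ℕ × Bool × ℝ) : Prop :=
  a.1 < b.1 ∧ ((a.2.1 = b.2.1 ∧ a.2.2 < b.2.2) ∨ (a.2.1 = false ∧ b.2.1 = true))

lemma MRel.trans {a b c : ℕ × Bool × ℝ} (h1 : MRel a b) (h2 : MRel b c) : MRel a c := by
  obtain ⟨hb1, hs1⟩ := h1
  obtain ⟨hb2, hs2⟩ := h2
  refine ⟨hb1.trans hb2, ?_⟩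
  rcases hs1 with ⟨e1, k1⟩ | ⟨f1, t1⟩ <;> rcases hs2 with ⟨e2, k2⟩ | ⟨f2, t2⟩
  · exact Or.inl ⟨e1.trans e2, k1.trans k2⟩
  · exact Or.inr ⟨e1.trans f2, t2⟩
  · rw [e2] at t1; exact Or.inr ⟨f1, t1⟩
  · rw [t1] at f2; simp at f2

lemma MRel.irrefl (a : ℕ × Bool × ℝ) : ¬ MRel a a := fun h => lt_irrefl _ h.1

lemma MRel.asymm {a b : ℕ × Bool × ℝ} (h : MRel a b) (h' : MRel b a) : False :=
  absurd (h.trans h') (MRel.irrefl a)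

/-- Mirsky-type bound: if all `MRel`-chains in a cell set `C` have size at most `ω`,
blocks are below `m` and at most `N` labels occur, then `|C| ≤ ω * (m + N)`. -/
lemma mirsky (ω m N : ℕ) (C : Finset (ℕ × Bool × ℝ))
    (hm : ∀ c ∈ C, c.1 < m)
    (hN : (C.image (fun c => c.2)).card ≤ N)
    (hch : ∀ S : Finset (ℕ × Bool × ℝ), S ⊆ C →
      (↑S : Set (ℕ × Bool × ℝ)).Pairwise (fun a b => MRel a b ∨ MRel b a) → S.card ≤ ω) :
    C.card ≤ ω * (m + N) := by
  classical
  set Fc : (ℕ × Bool × ℝ) → Finset (Finset (ℕ × Bool × ℝ)) :=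
    fun c => C.powerset.filter (fun S =>
      c ∈ S ∧ ((↑S : Set (ℕ × Bool × ℝ)).Pairwise (fun a b => MRel a b ∨ MRel b a)) ∧
        ∀ a ∈ S, a = c ∨ MRel a c) with hFc
  set rank : (ℕ × Bool × ℝ) → ℕ := fun c => (Fc c).sup Finset.card with hrank
  have hFc_nonempty : ∀ c ∈ C, {c} ∈ Fc c := by
    intro c hc
    simp only [hFc, Finset.mem_filter, Finset.mem_powerset]
    refine ⟨by simpa using hc, by simp, ?_, by simp⟩
    simp only [Finset.coe_singleton]
    exact Set.pairwise_singleton _ _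
  have hrank_le : ∀ c ∈ C, rank c ≤ ω := by
    intro c hc
    apply Finset.sup_le
    intro S hS
    simp only [hFc, Finset.mem_filter, Finset.mem_powerset] at hS
    exact hch S hS.1 hS.2.2.1
  have hrank_pos : ∀ c ∈ C, 1 ≤ rank c := by
    intro c hc
    have h1 := Finset.le_sup (f := Finset.card) (hFc_nonempty c hc)
    rw [Finset.card_singleton] at h1
    exact h1
  have hrank_lt : ∀ c ∈ C, ∀ c' ∈ C, MRel c c' → rank c < rank c' := by
    intro c hc c' hc' hrel
    obtain ⟨S, hS, hSsup⟩ := Finset.exists_mem_eq_sup (Fc c) ⟨{c}, hFc_nonempty c hc⟩ Finset.card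
    have hrceq : rank c = S.card := hSsup
    simp only [hFc, Finset.mem_filter, Finset.mem_powerset] at hS
    obtain ⟨hSC, hcS, hSchain, hSend⟩ := hS
    have hc'S : c' ∉ S := by
      intro hmem
      rcases hSend c' hmem with rfl | h
      · exact MRel.irrefl _ hrel
      · exact MRel.asymm hrel h
    have hins : insert c' S ∈ Fc c' := by
      simp only [hFc, Finset.mem_filter, Finset.mem_powerset]
      refine ⟨?_, by simp, ?_, ?_⟩
      · intro a ha
        rcases Finset.mem_insert.1 ha with rfl | ha
        · exact hc'
        · exact hSC ha
      · intro a ha b hb hab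
        simp only [Finset.coe_insert, Set.mem_insert_iff, Finset.mem_coe] at ha hb
        rcases ha with rfl | ha <;> rcases hb with rfl | hb
        · exact absurd rfl hab
        · refine Or.inr ?_
          rcases hSend b hb with rfl | h
          · exact hrel
          · exact h.trans hrel
        · refine Or.inl ?_
          rcases hSend a ha with rfl | h
          · exact hrel
          · exact h.trans hrel
        · exact hSchain ha hb hab
      · intro a ha
        rcases Finset.mem_insert.1 ha with rfl | ha
        · exact Or.inl rfl
        · right
          rcases hSend a ha with rfl | h
          · exact hrel
          · exact h.trans hrel
    have h2 : S.card + 1 ≤ rank c' := by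
      have h1 := Finset.le_sup (f := Finset.card) hins
      rwa [Finset.card_insert_of_notMem hc'S] at h1
    omega
  have hsub : C ⊆ (Finset.range ω).biUnion
      (fun i => C.filter (fun c => rank c = i + 1)) := by
    intro c hc
    rw [Finset.mem_biUnion]
    have h1 := hrank_pos c hc
    have h2 := hrank_le c hc
    exact ⟨rank c - 1, Finset.mem_range.2 (by omega),
      Finset.mem_filter.2 ⟨hc, by omega⟩⟩
  have hcardle : C.card ≤ ∑ i ∈ Finset.range ω,
      (C.filter (fun c => rank c = i + 1)).card :=
    (Finset.card_le_card hsub).trans Finset.card_biUnion_le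
  have hanti : ∀ i : ℕ, (C.filter (fun c => rank c = i + 1)).card ≤ m + N := by
    intro i
    set A := C.filter (fun c => rank c = i + 1) with hA
    have hincomp : ∀ a ∈ A, ∀ b ∈ A, ¬ MRel a b := by
      intro a ha b hb hrel
      simp only [hA, Finset.mem_filter] at ha hb
      have := hrank_lt a ha.1 b hb.1 hrel
      omega
    set φ : (ℕ × Bool × ℝ) → ℕ ⊕ (Bool × ℝ) :=
      fun c => if ∀ d ∈ A, d.2 = c.2 → c.1 ≤ d.1 then Sum.inr c.2 else Sum.inl c.1 with hφ
    have hinj : ∀ a ∈ A, ∀ b ∈ A, φ a = φ b → a = b := by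
      intro a ha b hb heq
      by_cases hma : ∀ d ∈ A, d.2 = a.2 → a.1 ≤ d.1 <;>
        by_cases hmb : ∀ d ∈ A, d.2 = b.2 → b.1 ≤ d.1
      · rw [hφ] at heq; simp only at heq
        rw [if_pos hma, if_pos hmb] at heq
        have hlab : a.2 = b.2 := by simpa using heq
        have h1 := hma b hb hlab.symm
        have h2 := hmb a ha hlab
        exact Prod.ext (le_antisymm h1 h2) hlab
      · rw [hφ] at heq; simp only at heq
        rw [if_pos hma, if_neg hmb] at heq
        exact absurd heq (by simp)
      · rw [hφ] at heq; simp only at heq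
        rw [if_neg hma, if_pos hmb] at heq
        exact absurd heq (by simp)
      · rw [hφ] at heq; simp only at heq
        rw [if_neg hma, if_neg hmb] at heq
        have hblk : a.1 = b.1 := by simpa using heq
        by_cases hlab : a.2 = b.2
        · exact Prod.ext hblk hlab
        push_neg at hma hmb
        obtain ⟨d, hdA, hdl, hdlt⟩ := hma
        obtain ⟨e, heA, hel, helt⟩ := hmb
        exfalso
        rcases Bool.eq_false_or_eq_true a.2.1 with hsa | hsa <;>
          rcases Bool.eq_false_or_eq_true b.2.1 with hsb | hsb
        · have hk : a.2.2 ≠ b.2.2 := by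
            intro hk; apply hlab
            exact Prod.ext (hsa.trans hsb.symm) hk
          rcases lt_or_gt_of_ne hk with hklt | hkgt
          · exact hincomp d hdA b hb ⟨by omega, Or.inl ⟨by rw [hdl, hsa, hsb], by rw [hdl]; exact hklt⟩⟩
          · exact hincomp e heA a ha ⟨by omega, Or.inl ⟨by rw [hel, hsa, hsb], by rw [hel]; exact hkgt⟩⟩
        · exact hincomp e heA a ha ⟨by omega, Or.inr ⟨by rw [hel]; exact hsb, hsa⟩⟩
        · exact hincomp d hdA b hb ⟨by omega, Or.inr ⟨by rw [hdl]; exact hsa, hsb⟩⟩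
        · have hk : a.2.2 ≠ b.2.2 := by
            intro hk; apply hlab
            exact Prod.ext (hsa.trans hsb.symm) hk
          rcases lt_or_gt_of_ne hk with hklt | hkgt
          · exact hincomp d hdA b hb ⟨by omega, Or.inl ⟨by rw [hdl, hsa, hsb], by rw [hdl]; exact hklt⟩⟩
          · exact hincomp e heA a ha ⟨by omega, Or.inl ⟨by rw [hel, hsa, hsb], by rw [hel]; exact hkgt⟩⟩
    have hmaps : ∀ a ∈ A, φ a ∈ (Finset.range m).disjSum (C.image (fun c => c.2)) := by
      intro a ha
      have haC : a ∈ C := (Finset.mem_filter.1 (hA ▸ ha)).1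
      rw [hφ]; simp only
      by_cases hma : ∀ d ∈ A, d.2 = a.2 → a.1 ≤ d.1
      · rw [if_pos hma]
        exact Finset.inr_mem_disjSum.2 (Finset.mem_image_of_mem _ haC)
      · rw [if_neg hma]
        exact Finset.inl_mem_disjSum.2 (Finset.mem_range.2 (hm a haC))
    have hc1 := Finset.card_le_card_of_injOn φ hmaps (fun a ha b hb => hinj a ha b hb)
    calc A.card ≤ ((Finset.range m).disjSum (C.image (fun c => c.2))).card := hc1
      _ = m + (C.image (fun c => c.2)).card := by
          rw [Finset.card_disjSum, Finset.card_range]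
      _ ≤ m + N := by omega
  calc C.card ≤ ∑ i ∈ Finset.range ω, (C.filter (fun c => rank c = i + 1)).card := hcardle
    _ ≤ ∑ _i ∈ Finset.range ω, (m + N) := Finset.sum_le_sum (fun i _ => hanti i)
    _ = ω * (m + N) := by rw [Finset.sum_const, Finset.card_range, smul_eq_mul]
/-! ### The sweep construction -/

/-- Comparability of labelled points. -/
def PRel (lab : ℝ → Bool × ℝ) (b b' : ℝ) : Prop :=
  b < b' ∧ (((lab b).1 = (lab b').1 ∧ (lab b).2 < (lab b').2) ∨
    ((lab b).1 = false ∧ (lab b').1 = true))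

noncomputable section SweepDefs

/-- Number of labels occurring in `X`. -/
def lcnt (lab : ℝ → Bool × ℝ) (X : Finset ℝ) : ℕ := (X.image lab).card

def nextA (E : Finset ℝ) (s : ℝ) : Finset ℝ := E.filter (fun b => s < b)

def zset (E : Finset ℝ) (lab : ℝ → Bool × ℝ) (K : ℕ) (s : ℝ) : Finset ℝ :=
  (nextA E s).filter (fun z => K + 1 ≤ lcnt lab ((nextA E s).filter (fun b => b ≤ z)))

def zpt (E : Finset ℝ) (lab : ℝ → Bool × ℝ) (K : ℕ) (s : ℝ) : ℝ :=
  if h : (zset E lab K s).Nonempty then (zset E lab K s).min' h else 0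

def pvs (E : Finset ℝ) (lab : ℝ → Bool × ℝ) (K : ℕ) (s : ℝ) : Finset ℝ :=
  (nextA E s).filter (fun b => b < zpt E lab K s)

def pvm (E : Finset ℝ) (lab : ℝ → Bool × ℝ) (K : ℕ) (s : ℝ) : ℝ :=
  if h : (pvs E lab K s).Nonempty then (pvs E lab K s).max' h else 0

def cutF (E : Finset ℝ) (lab : ℝ → Bool × ℝ) (K : ℕ) (F : Finset ℝ) (s : ℝ) : ℝ :=
  if h : pvm E lab K s < zpt E lab K s then
    (exists_between_avoid _ _ F h).choose else s

def activeS (E : Finset ℝ) (lab : ℝ → Bool × ℝ) (K : ℕ) (s : ℝ) : Prop :=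
  K + 1 ≤ lcnt lab (nextA E s)

def sweep (E : Finset ℝ) (lab : ℝ → Bool × ℝ) (K : ℕ) (F : Finset ℝ) (pm : ℝ) : ℕ → ℝ
  | 0 => pm
  | (k+1) =>
    if activeS E lab K (sweep E lab K F pm k) then cutF E lab K F (sweep E lab K F pm k)
    else sweep E lab K F pm k

end SweepDefs

namespace SweepFacts

variable {E : Finset ℝ} {lab : ℝ → Bool × ℝ} {K : ℕ} {F : Finset ℝ} {s : ℝ}

lemma lcnt_mono {X Y : Finset ℝ} (h : X ⊆ Y) : lcnt lab X ≤ lcnt lab Y :=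
  Finset.card_le_card (Finset.image_subset_image h)

lemma zset_nonempty (hact : activeS E lab K s) : (zset E lab K s).Nonempty := by
  have hne : (nextA E s).Nonempty := by
    rcases Finset.eq_empty_or_nonempty (nextA E s) with h | h
    · exfalso; unfold activeS lcnt at hact; rw [h] at hact; simp at hact
    · exact h
  refine ⟨(nextA E s).max' hne, ?_⟩
  unfold zset
  rw [Finset.mem_filter]
  refine ⟨(nextA E s).max'_mem hne, ?_⟩
  have : (nextA E s).filter (fun b => b ≤ (nextA E s).max' hne) = nextA E s := by
    apply Finset.filter_true_of_mem
    intro b hb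
    exact Finset.le_max' _ b hb
  rw [this]
  exact hact

lemma zpt_mem (hact : activeS E lab K s) : zpt E lab K s ∈ zset E lab K s := by
  unfold zpt
  rw [dif_pos (zset_nonempty hact)]
  exact Finset.min'_mem _ _

lemma zpt_min (hact : activeS E lab K s) {z : ℝ} (hz : z ∈ zset E lab K s) :
    zpt E lab K s ≤ z := by
  unfold zpt
  rw [dif_pos (zset_nonempty hact)]
  exact Finset.min'_le _ _ hz

/-- Below `zpt`, at most `K` labels occur. -/
lemma lcnt_lt_zpt (hact : activeS E lab K s) {w : ℝ} (hw : w < zpt E lab K s) :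
    lcnt lab ((nextA E s).filter (fun b => b ≤ w)) ≤ K := by
  by_contra hcon
  push_neg at hcon
  set X := (nextA E s).filter (fun b => b ≤ w) with hX
  have hXne : X.Nonempty := by
    rcases Finset.eq_empty_or_nonempty X with h | h
    · exfalso; unfold lcnt at hcon; rw [h] at hcon; simp at hcon
    · exact h
  set mx := X.max' hXne with hmx
  have hmem : mx ∈ X := X.max'_mem hXne
  have hmxw : mx ≤ w := (Finset.mem_filter.1 hmem).2
  have hfeq : (nextA E s).filter (fun b => b ≤ mx) = X := by
    apply Finset.ext
    intro b
    simp only [hX, Finset.mem_filter]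
    constructor
    · rintro ⟨h1, h2⟩; exact ⟨h1, h2.trans hmxw⟩
    · rintro ⟨h1, h2⟩
      refine ⟨h1, ?_⟩
      exact Finset.le_max' X b (Finset.mem_filter.2 ⟨h1, h2⟩)
  have hmz : mx ∈ zset E lab K s := by
    unfold zset
    rw [Finset.mem_filter, hfeq]
    exact ⟨(Finset.mem_filter.1 hmem).1, by omega⟩
  have := zpt_min hact hmz
  linarith
lemma pvs_nonempty (hK : 1 ≤ K) (hact : activeS E lab K s) : (pvs E lab K s).Nonempty := by
  have hz := zpt_mem hact
  unfold zset at hz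
  rw [Finset.mem_filter] at hz
  obtain ⟨hz1, hz2⟩ := hz
  set B := (nextA E s).filter (fun b => b ≤ zpt E lab K s) with hB
  have hcard : 2 ≤ B.card := by
    have h1 : lcnt lab B ≤ B.card := Finset.card_image_le
    omega
  obtain ⟨b1, hb1, b2, hb2, hne⟩ := Finset.one_lt_card.1 hcard
  rcases lt_trichotomy b1 b2 with h | h | h
  · refine ⟨b1, ?_⟩
    unfold pvs
    rw [Finset.mem_filter]
    simp only [hB, Finset.mem_filter] at hb1 hb2
    exact ⟨hb1.1, lt_of_lt_of_le h hb2.2⟩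
  · exact absurd h hne
  · refine ⟨b2, ?_⟩
    unfold pvs
    rw [Finset.mem_filter]
    simp only [hB, Finset.mem_filter] at hb1 hb2
    exact ⟨hb2.1, lt_of_lt_of_le h hb1.2⟩

lemma pvm_mem (hK : 1 ≤ K) (hact : activeS E lab K s) : pvm E lab K s ∈ pvs E lab K s := by
  unfold pvm
  rw [dif_pos (pvs_nonempty hK hact)]
  exact Finset.max'_mem _ _

lemma pvm_lt_zpt (hK : 1 ≤ K) (hact : activeS E lab K s) : pvm E lab K s < zpt E lab K s :=
  (Finset.mem_filter.1 (pvm_mem hK hact)).2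

lemma lt_pvm (hK : 1 ≤ K) (hact : activeS E lab K s) : s < pvm E lab K s := by
  have := pvm_mem hK hact
  unfold pvs nextA at this
  rw [Finset.mem_filter, Finset.mem_filter] at this
  exact this.1.2

lemma pvm_max (hK : 1 ≤ K) (hact : activeS E lab K s) {b : ℝ}
    (hb : b ∈ nextA E s) (hlt : b < zpt E lab K s) : b ≤ pvm E lab K s := by
  unfold pvm
  rw [dif_pos (pvs_nonempty hK hact)]
  apply Finset.le_max'
  unfold pvs
  rw [Finset.mem_filter]
  exact ⟨hb, hlt⟩

lemma cut_gt_pvm (hK : 1 ≤ K) (hact : activeS E lab K s) :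
    pvm E lab K s < cutF E lab K F s := by
  unfold cutF
  rw [dif_pos (pvm_lt_zpt hK hact)]
  exact (exists_between_avoid _ _ F (pvm_lt_zpt hK hact)).choose_spec.1

lemma cut_lt_zpt (hK : 1 ≤ K) (hact : activeS E lab K s) :
    cutF E lab K F s < zpt E lab K s := by
  unfold cutF
  rw [dif_pos (pvm_lt_zpt hK hact)]
  exact (exists_between_avoid _ _ F (pvm_lt_zpt hK hact)).choose_spec.2.1

lemma cut_not_mem (hK : 1 ≤ K) (hact : activeS E lab K s) :
    cutF E lab K F s ∉ F := by
  unfold cutF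
  rw [dif_pos (pvm_lt_zpt hK hact)]
  exact (exists_between_avoid _ _ F (pvm_lt_zpt hK hact)).choose_spec.2.2

lemma lt_cut (hK : 1 ≤ K) (hact : activeS E lab K s) : s < cutF E lab K F s :=
  (lt_pvm hK hact).trans (cut_gt_pvm hK hact)

lemma zpt_mem_E (hact : activeS E lab K s) : zpt E lab K s ∈ E := by
  have := zpt_mem hact
  unfold zset nextA at this
  rw [Finset.mem_filter, Finset.mem_filter] at this
  exact this.1.1

/-- Points of `E` beyond the cut are at least `zpt`. -/
lemma cut_crossing (hK : 1 ≤ K) (hact : activeS E lab K s) {b : ℝ}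
    (hb : b ∈ E) (hgt : cutF E lab K F s < b) : zpt E lab K s ≤ b := by
  by_contra hcon
  push_neg at hcon
  have hbn : b ∈ nextA E s := by
    unfold nextA
    rw [Finset.mem_filter]
    exact ⟨hb, (lt_cut hK (F := F) hact).trans hgt⟩
  have := pvm_max hK hact hbn hcon
  have := cut_gt_pvm (F := F) hK hact
  linarith

/-- At most `K` labels occur strictly between `s` and its cut. -/
lemma piece_lcnt (hK : 1 ≤ K) (hact : activeS E lab K s) :
    lcnt lab (E.filter (fun b => s < b ∧ b < cutF E lab K F s)) ≤ K := by
  have hsub : E.filter (fun b => s < b ∧ b < cutF E lab K F s) ⊆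
      (nextA E s).filter (fun b => b ≤ pvm E lab K s) := by
    intro b hb
    rw [Finset.mem_filter] at hb
    obtain ⟨hbE, hb1, hb2⟩ := hb
    have hbn : b ∈ nextA E s := Finset.mem_filter.2 ⟨hbE, hb1⟩
    rw [Finset.mem_filter]
    refine ⟨hbn, ?_⟩
    apply pvm_max hK hact hbn
    have := cut_lt_zpt (F := F) hK hact
    linarith
  exact (lcnt_mono hsub).trans (lcnt_lt_zpt hact (pvm_lt_zpt hK hact))

end SweepFacts
open SweepFacts in
/-- Core construction: cut points splitting `(pm, pp)` into pieces each seeing at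
most `K` labels, with at most `ω * N / 9` cuts. -/
lemma core_cuts (E : Finset ℝ) (lab : ℝ → Bool × ℝ) (ω K N : ℕ) (pm pp : ℝ) (F : Finset ℝ)
    (hωK : ω + 8 ≤ K)
    (hN : (E.image lab).card ≤ N)
    (hEl : ∀ b ∈ E, pm < b) (hEr : ∀ b ∈ E, b < pp)
    (hchain : ∀ S : Finset ℝ, S ⊆ E →
      (↑S : Set ℝ).Pairwise (fun b b' => PRel lab b b' ∨ PRel lab b' b) → S.card ≤ ω) :
    ∃ cuts : Finset ℝ, 9 * cuts.card ≤ ω * N ∧ (∀ x ∈ cuts, pm < x ∧ x < pp ∧ x ∉ F) ∧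
      ∀ s t : ℝ, pm ≤ s → s < t → (∀ x ∈ cuts, x ≤ s ∨ t ≤ x) →
        ((E.filter (fun b => s < b ∧ b < t)).image lab).card ≤ K := by
  classical
  have hK : 1 ≤ K := by omega
  set sw : ℕ → ℝ := sweep E lab K F pm with hsw
  have hsw0 : sw 0 = pm := rfl
  have hsucc : ∀ k, sw (k+1) =
      if activeS E lab K (sw k) then cutF E lab K F (sw k) else sw k := fun k => rfl
  have hsucc_act : ∀ k, activeS E lab K (sw k) → sw (k+1) = cutF E lab K F (sw k) := by
    intro k h; rw [hsucc k, if_pos h]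
  have hsucc_inact : ∀ k, ¬ activeS E lab K (sw k) → sw (k+1) = sw k := by
    intro k h; rw [hsucc k, if_neg h]
  have hmono1 : ∀ k, sw k ≤ sw (k+1) := by
    intro k
    rw [hsucc k]
    by_cases h : activeS E lab K (sw k)
    · rw [if_pos h]; exact (lt_cut hK h).le
    · rw [if_neg h]
  have hmono : Monotone sw := monotone_nat_of_le_succ hmono1
  have hpmle : ∀ k, pm ≤ sw k := fun k => hsw0 ▸ hmono (Nat.zero_le k)
  -- there is an inactive step
  have hexists : ∃ k, ¬ activeS E lab K (sw k) := by
    by_contra hcon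
    push_neg at hcon
    set g : ℕ → ℝ := fun k => pvm E lab K (sw k) with hg
    have hgE : ∀ k, g k ∈ E := by
      intro k
      have := pvm_mem hK (hcon k)
      unfold pvs nextA at this
      rw [Finset.mem_filter, Finset.mem_filter] at this
      exact this.1.1
    have hgmono : StrictMono g := by
      apply strictMono_nat_of_lt_succ
      intro k
      have h1 : g k < cutF E lab K F (sw k) := cut_gt_pvm hK (hcon k)
      have h2 : sw (k+1) = cutF E lab K F (sw k) := hsucc_act k (hcon k)
      have h3 : sw (k+1) < g (k+1) := lt_pvm hK (hcon (k+1))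
      rw [hg]; dsimp only
      rw [← h2] at h1
      linarith
    have hcard := Finset.card_le_card_of_injOn g
      (fun k (_ : k ∈ Finset.range (E.card + 1)) => hgE k)
      (fun a _ b _ hab => hgmono.injective hab)
    rw [Finset.card_range] at hcard
    omega
  set T := Nat.find hexists with hT
  have hTspec : ¬ activeS E lab K (sw T) := Nat.find_spec hexists
  have hTk : ∀ k, k < T → activeS E lab K (sw k) := by
    intro k hk
    by_contra h
    have := Nat.find_min' hexists h
    omega
  set cuts : Finset ℝ := (Finset.range T).image (fun k => sw (k+1)) with hcuts
  refine ⟨cuts, ?_, ?_, ?_⟩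
  · -- counting via mirsky
    set Bk : ℕ → Finset ℝ := fun k =>
      (nextA E (sw k)).filter (fun b => b ≤ zpt E lab K (sw k)) with hBk
    have hBkE : ∀ k, Bk k ⊆ E := by
      intro k b hb
      rw [hBk] at hb
      simp only [Finset.mem_filter, nextA] at hb
      exact hb.1.1
    have hBkcnt : ∀ k, k < T → K + 1 ≤ lcnt lab (Bk k) := by
      intro k hk
      have := zpt_mem (hTk k hk)
      unfold zset at this
      rw [Finset.mem_filter] at this
      exact this.2
    set C : Finset (ℕ × Bool × ℝ) := (Finset.range T).biUnion
      (fun k => ((Bk k).image lab).image (fun l => (k, l))) with hC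
    have hCmem : ∀ c ∈ C, c.1 < T ∧ ∃ b, b ∈ Bk c.1 ∧ lab b = c.2 := by
      intro c hc
      rw [hC, Finset.mem_biUnion] at hc
      obtain ⟨k, hk, hmem⟩ := hc
      rw [Finset.mem_image] at hmem
      obtain ⟨l, hl, rfl⟩ := hmem
      rw [Finset.mem_image] at hl
      obtain ⟨b, hb, rfl⟩ := hl
      exact ⟨Finset.mem_range.1 hk, b, hb, rfl⟩
    -- lower bound for C.card
    have hClower : (K + 1) * T ≤ C.card := by
      rw [hC, Finset.card_biUnion]
      · have : ∀ k ∈ Finset.range T, K + 1 ≤ (((Bk k).image lab).image (fun l => (k, l))).card := by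
          intro k hk
          rw [Finset.card_image_of_injective _ (fun a b hab => by
            simpa using congrArg Prod.snd hab)]
          exact hBkcnt k (Finset.mem_range.1 hk)
        calc (K + 1) * T = ∑ _k ∈ Finset.range T, (K + 1) := by
              rw [Finset.sum_const, Finset.card_range, smul_eq_mul, Nat.mul_comm]
          _ ≤ _ := Finset.sum_le_sum this
      · intro a _ b _ hab
        apply Finset.disjoint_left.2
        intro c hca hcb
        rw [Finset.mem_image] at hca hcb
        obtain ⟨_, _, rfl⟩ := hca
        obtain ⟨_, _, h⟩ := hcb
        exact hab (congrArg Prod.fst h).symm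
    -- chain hypothesis for C
    have hch : ∀ S : Finset (ℕ × Bool × ℝ), S ⊆ C →
        (↑S : Set (ℕ × Bool × ℝ)).Pairwise (fun a b => MRel a b ∨ MRel b a) →
        S.card ≤ ω := by
      intro S hSC hSch
      set bof : (ℕ × Bool × ℝ) → ℝ := fun c =>
        if h : ∃ b, b ∈ Bk c.1 ∧ lab b = c.2 then h.choose else 0 with hbof
      have hbof_spec : ∀ c ∈ C, bof c ∈ Bk c.1 ∧ lab (bof c) = c.2 := by
        intro c hc
        obtain ⟨-, hex⟩ := hCmem c hc
        rw [hbof]; dsimp only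
        rw [dif_pos hex]
        exact hex.choose_spec
      -- ordering of chosen points across blocks
      have horder : ∀ c ∈ C, ∀ c' ∈ C, c.1 < c'.1 → bof c ≤ bof c' := by
        intro c hc c' hc' hlt
        obtain ⟨hcT, -⟩ := hCmem c hc
        obtain ⟨hcT', -⟩ := hCmem c' hc'
        obtain ⟨hb, -⟩ := hbof_spec c hc
        obtain ⟨hb', -⟩ := hbof_spec c' hc'
        rw [hBk] at hb hb'
        simp only [Finset.mem_filter, nextA] at hb hb'
        have h1 : bof c ≤ zpt E lab K (sw c.1) := hb.2
        have h2 : sw c'.1 < bof c' := hb'.1.2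
        have h3 : cutF E lab K F (sw c.1) ≤ sw c'.1 := by
          have := hsucc_act c.1 (hTk c.1 hcT)
          rw [← this]
          exact hmono hlt
        have h4 : cutF E lab K F (sw c.1) < bof c' := lt_of_le_of_lt h3 h2
        have h5 := cut_crossing hK (hTk c.1 hcT) hb'.1.1 h4
        linarith
      have hbof_strict : ∀ c ∈ C, ∀ c' ∈ C, MRel c c' → bof c < bof c' := by
        intro c hc c' hc' hrel
        have hle := horder c hc c' hc' hrel.1
        rcases lt_or_eq_of_le hle with h | h
        · exact h
        · exfalso
          have hl1 := (hbof_spec c hc).2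
          have hl2 := (hbof_spec c' hc').2
          rw [h, hl2] at hl1
          rcases hrel.2 with ⟨hs, hk2⟩ | ⟨hs1, hs2⟩
          · rw [← hl1] at hk2; exact lt_irrefl _ hk2
          · rw [← hl1] at hs1; rw [hs2] at hs1; simp at hs1
      set S' : Finset ℝ := S.image bof with hS'
      have hcard : S'.card = S.card := by
        apply Finset.card_image_of_injOn
        intro a ha b hb hab
        by_contra hne
        rcases hSch (Finset.mem_coe.2 ha) (Finset.mem_coe.2 hb) hne with h | h
        · exact absurd hab (ne_of_lt (hbof_strict a (hSC ha) b (hSC hb) h))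
        · exact absurd hab.symm (ne_of_lt (hbof_strict b (hSC hb) a (hSC ha) h))
      have hsub : S' ⊆ E := by
        intro x hx
        rw [hS', Finset.mem_image] at hx
        obtain ⟨c, hcS, rfl⟩ := hx
        exact hBkE c.1 (hbof_spec c (hSC hcS)).1
      have hpair : (↑S' : Set ℝ).Pairwise (fun b b' => PRel lab b b' ∨ PRel lab b' b) := by
        intro x hx y hy hxy
        simp only [hS', Finset.coe_image, Set.mem_image, Finset.mem_coe] at hx hy
        obtain ⟨c, hcS, rfl⟩ := hx
        obtain ⟨c', hcS', rfl⟩ := hy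
        have hne : c ≠ c' := fun h => hxy (by rw [h])
        have hrel := hSch (Finset.mem_coe.2 hcS) (Finset.mem_coe.2 hcS') hne
        have hPRel : ∀ d, d ∈ C → ∀ d', d' ∈ C → MRel d d' → PRel lab (bof d) (bof d') := by
          intro d hd d' hd' hrel'
          refine ⟨hbof_strict d hd d' hd' hrel', ?_⟩
          rw [(hbof_spec d hd).2, (hbof_spec d' hd').2]
          exact hrel'.2
        rcases hrel with h | h
        · exact Or.inl (hPRel c (hSC hcS) c' (hSC hcS') h)
        · exact Or.inr (hPRel c' (hSC hcS') c (hSC hcS) h)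
      have := hchain S' hsub hpair
      omega
    -- apply mirsky
    have hCN : (C.image (fun c => c.2)).card ≤ N := by
      refine le_trans (Finset.card_le_card ?_) hN
      intro l hl
      rw [Finset.mem_image] at hl
      obtain ⟨c, hc, rfl⟩ := hl
      obtain ⟨-, b, hb, hlab⟩ := hCmem c hc
      rw [← hlab]
      exact Finset.mem_image_of_mem _ (hBkE c.1 hb)
    have hmir := mirsky ω T N C (fun c hc => (hCmem c hc).1) hCN hch
    have hTbound : 9 * T ≤ ω * N := by nlinarith [hClower, hmir]
    have hcc : cuts.card ≤ T := by
      rw [hcuts]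
      exact Finset.card_image_le.trans (by rw [Finset.card_range])
    omega
  · -- cuts are in (pm, pp) and avoid F
    intro x hx
    rw [hcuts, Finset.mem_image] at hx
    obtain ⟨k, hk, rfl⟩ := hx
    have hact := hTk k (Finset.mem_range.1 hk)
    have heq := hsucc_act k hact
    rw [heq]
    refine ⟨lt_of_le_of_lt (hpmle k) (lt_cut hK hact), ?_, cut_not_mem hK hact⟩
    have h1 : cutF E lab K F (sw k) < zpt E lab K (sw k) := cut_lt_zpt hK hact
    have h2 : zpt E lab K (sw k) ∈ E := zpt_mem_E hact
    exact h1.trans (hEr _ h2)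
  · -- pieces see at most K labels
    intro s t hpms hst havoid
    set k0 := Nat.findGreatest (fun k => sw k ≤ s) T with hk0
    have hP0 : sw 0 ≤ s := by rw [hsw0]; exact hpms
    have hk0le : sw k0 ≤ s := by
      rw [hk0]
      exact Nat.findGreatest_spec (P := fun k => sw k ≤ s) (Nat.zero_le T) hP0
    by_cases hk0T : k0 < T
    · have hact := hTk k0 hk0T
      have hcutk : sw (k0 + 1) ∈ cuts := by
        rw [hcuts]
        exact Finset.mem_image_of_mem _ (Finset.mem_range.2 hk0T)
      have hts : t ≤ sw (k0 + 1) := by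
        rcases havoid _ hcutk with h | h
        · exfalso
          have := Nat.le_findGreatest (P := fun k => sw k ≤ s) (by omega : k0 + 1 ≤ T) h
          omega
        · exact h
      have hswcut := hsucc_act k0 hact
      have hsubE : E.filter (fun b => s < b ∧ b < t) ⊆
          E.filter (fun b => sw k0 < b ∧ b < cutF E lab K F (sw k0)) := by
        intro b hb
        rw [Finset.mem_filter] at hb ⊢
        rw [hswcut] at hts
        exact ⟨hb.1, lt_of_le_of_lt hk0le hb.2.1, lt_of_lt_of_le hb.2.2 hts⟩
      exact (lcnt_mono hsubE).trans (piece_lcnt hK hact)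
    · have hk0eq : k0 = T := le_antisymm (Nat.findGreatest_le T) (by omega)
      have hsubE : E.filter (fun b => s < b ∧ b < t) ⊆ nextA E (sw T) := by
        intro b hb
        rw [Finset.mem_filter] at hb
        unfold nextA
        rw [Finset.mem_filter]
        rw [hk0eq] at hk0le
        exact ⟨hb.1, lt_of_le_of_lt hk0le hb.2.1⟩
      have hfin : lcnt lab (nextA E (sw T)) ≤ K := by
        unfold activeS at hTspec
        omega
      exact (lcnt_mono hsubE).trans hfin
/-! ### Labelled endpoints of connecting intervals -/

noncomputable section LabelDefs

/-- Encoding of a segment as a (side, key) label. -/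
def enc (pm : ℝ) (xy : ℝ × ℝ) : Bool × ℝ := if xy.2 ≤ pm then (true, xy.2) else (false, xy.1)

/-- `b` is the inner endpoint of interval `J` whose outer endpoint lies in the
segment `xy` of `P₁`, encoded by label `p`. -/
def LabSpec (𝓘 : Finset (ℝ × ℝ)) (P₁ : Finset ℝ) (pm pp b : ℝ)
    (p : Bool × ℝ) (J : ℝ × ℝ) : Prop :=
  J ∈ 𝓘 ∧ ∃ xy : ℝ × ℝ, IsSegment P₁ xy.1 xy.2 ∧ p = enc pm xy ∧
    ((xy.2 ≤ pm ∧ J.2 = b ∧ xy.1 < J.1 ∧ J.1 < xy.2) ∨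
     (pp ≤ xy.1 ∧ J.1 = b ∧ xy.1 < J.2 ∧ J.2 < xy.2))

def wOf (𝓘 : Finset (ℝ × ℝ)) (P₁ : Finset ℝ) (pm pp b : ℝ) : (Bool × ℝ) × (ℝ × ℝ) :=
  if h : ∃ w : (Bool × ℝ) × (ℝ × ℝ), LabSpec 𝓘 P₁ pm pp b w.1 w.2 then h.choose
  else ((true, 2), (0, 0))

def labF (𝓘 : Finset (ℝ × ℝ)) (P₁ : Finset ℝ) (pm pp b : ℝ) : Bool × ℝ :=
  (wOf 𝓘 P₁ pm pp b).1

def Jof (𝓘 : Finset (ℝ × ℝ)) (P₁ : Finset ℝ) (pm pp b : ℝ) : ℝ × ℝ :=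
  (wOf 𝓘 P₁ pm pp b).2

def EptP (𝓘 : Finset (ℝ × ℝ)) (P₁ : Finset ℝ) (pm pp b : ℝ) : Prop :=
  pm < b ∧ b < pp ∧ ∃ w : (Bool × ℝ) × (ℝ × ℝ), LabSpec 𝓘 P₁ pm pp b w.1 w.2

def EptsF (𝓘 : Finset (ℝ × ℝ)) (P₁ : Finset ℝ) (pm pp : ℝ) : Finset ℝ :=
  (𝓘.image Prod.fst ∪ 𝓘.image Prod.snd).filter (EptP 𝓘 P₁ pm pp)

end LabelDefs

section LabelFacts

variable {𝓘 : Finset (ℝ × ℝ)} {P₁ : Finset ℝ} {pm pp : ℝ}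

lemma labSpec_choice {b : ℝ}
    (h : ∃ w : (Bool × ℝ) × (ℝ × ℝ), LabSpec 𝓘 P₁ pm pp b w.1 w.2) :
    LabSpec 𝓘 P₁ pm pp b (labF 𝓘 P₁ pm pp b) (Jof 𝓘 P₁ pm pp b) := by
  unfold labF Jof wOf
  rw [dif_pos h]
  exact h.choose_spec

lemma labSpec_unique (h𝓘 : IsIntervalSystem 𝓘)
    (hP1pos : ∀ q ∈ P₁, 0 < q) (hP1lt1 : ∀ q ∈ P₁, q < 1) {b : ℝ}
    {p p' : Bool × ℝ} {J J' : ℝ × ℝ}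
    (hA : LabSpec 𝓘 P₁ pm pp b p J) (hB : LabSpec 𝓘 P₁ pm pp b p' J') : p = p' := by
  obtain ⟨hJ, xy, hxyseg, hpenc, hform⟩ := hA
  obtain ⟨hJ', xy', hxyseg', hpenc', hform'⟩ := hB
  have hJIoo := h𝓘.mem_Ioo J hJ
  have hJIoo' := h𝓘.mem_Ioo J' hJ'
  have hJeq : J = J' := by
    by_contra hne
    have hd := h𝓘.ends_distinct J hJ J' hJ' hne
    rcases hform with ⟨-, h1, -, -⟩ | ⟨-, h1, -, -⟩ <;>
      rcases hform' with ⟨-, h2, -, -⟩ | ⟨-, h2, -, -⟩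
    · exact hd.2.2.2 (h1.trans h2.symm)
    · exact hd.2.2.1 (h1.trans h2.symm)
    · exact hd.2.1 (h1.trans h2.symm)
    · exact hd.1 (h1.trans h2.symm)
  subst hJeq
  have hxy : xy = xy' := by
    rcases hform with ⟨-, h1, ha1, hb1⟩ | ⟨-, h1, ha1, hb1⟩ <;>
      rcases hform' with ⟨-, h2, ha2, hb2⟩ | ⟨-, h2, ha2, hb2⟩
    · obtain ⟨e1, e2⟩ := seg_eq_of_mem hP1pos hP1lt1 hxyseg hxyseg' ha1 hb1 ha2 hb2
      exact Prod.ext e1 e2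
    · exfalso; rw [← h2] at h1; linarith [hJIoo.2.1]
    · exfalso; rw [← h2] at h1; linarith [hJIoo.2.1]
    · obtain ⟨e1, e2⟩ := seg_eq_of_mem hP1pos hP1lt1 hxyseg hxyseg' ha1 hb1 ha2 hb2
      exact Prod.ext e1 e2
  rw [hpenc, hpenc', hxy]

lemma labF_eq (h𝓘 : IsIntervalSystem 𝓘)
    (hP1pos : ∀ q ∈ P₁, 0 < q) (hP1lt1 : ∀ q ∈ P₁, q < 1) {b : ℝ}
    {p : Bool × ℝ} {J : ℝ × ℝ} (h : LabSpec 𝓘 P₁ pm pp b p J) :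
    labF 𝓘 P₁ pm pp b = p := by
  have hex : ∃ w : (Bool × ℝ) × (ℝ × ℝ), LabSpec 𝓘 P₁ pm pp b w.1 w.2 := ⟨(p, J), h⟩
  exact labSpec_unique h𝓘 hP1pos hP1lt1 (labSpec_choice hex) h

lemma mem_EptsF {b : ℝ} (hb : b ∈ EptsF 𝓘 P₁ pm pp) : EptP 𝓘 P₁ pm pp b :=
  (Finset.mem_filter.1 hb).2

lemma EptsF_mem {b : ℝ} (hP : EptP 𝓘 P₁ pm pp b) : b ∈ EptsF 𝓘 P₁ pm pp := by
  unfold EptsF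
  rw [Finset.mem_filter]
  refine ⟨?_, hP⟩
  obtain ⟨-, -, w, hJ, xy, hseg, henc, hform⟩ := hP
  rcases hform with ⟨-, h1, -, -⟩ | ⟨-, h1, -, -⟩
  · exact Finset.mem_union_right _ (Finset.mem_image.2 ⟨w.2, hJ, h1⟩)
  · exact Finset.mem_union_left _ (Finset.mem_image.2 ⟨w.2, hJ, h1⟩)

end LabelFacts
section MainLemmas

variable {𝓘 : Finset (ℝ × ℝ)} {P₁ : Finset ℝ} {pm pp : ℝ}

/-- A comparable family of labelled endpoints yields a clique in the overlap graph. -/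
lemma chain_card_le (h𝓘 : IsIntervalSystem 𝓘)
    (hP1pos : ∀ q ∈ P₁, 0 < q) (hP1lt1 : ∀ q ∈ P₁, q < 1) (hpmpp : pm < pp)
    (S : Finset ℝ) (hS : S ⊆ EptsF 𝓘 P₁ pm pp)
    (hpair : (↑S : Set ℝ).Pairwise
      (fun b b' => PRel (labF 𝓘 P₁ pm pp) b b' ∨ PRel (labF 𝓘 P₁ pm pp) b' b)) :
    S.card ≤ (overlapGraph 𝓘).cliqueNum := by
  classical
  have hspec : ∀ b ∈ S, LabSpec 𝓘 P₁ pm pp b (labF 𝓘 P₁ pm pp b) (Jof 𝓘 P₁ pm pp b) :=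
    fun b hb => labSpec_choice (mem_EptsF (hS hb)).2.2
  have hbpm : ∀ b ∈ S, pm < b ∧ b < pp := by
    intro b hb
    have := mem_EptsF (hS hb)
    exact ⟨this.1, this.2.1⟩
  have hJ𝓘 : ∀ b ∈ S, Jof 𝓘 P₁ pm pp b ∈ 𝓘 := fun b hb => (hspec b hb).1
  -- each labelled point carries a coherent witness
  have hw : ∀ b ∈ S, ∃ xy : ℝ × ℝ, IsSegment P₁ xy.1 xy.2 ∧
      ((labF 𝓘 P₁ pm pp b = (true, xy.2) ∧ xy.2 ≤ pm ∧ (Jof 𝓘 P₁ pm pp b).2 = b ∧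
        xy.1 < (Jof 𝓘 P₁ pm pp b).1 ∧ (Jof 𝓘 P₁ pm pp b).1 < xy.2) ∨
       (labF 𝓘 P₁ pm pp b = (false, xy.1) ∧ pp ≤ xy.1 ∧ (Jof 𝓘 P₁ pm pp b).1 = b ∧
        xy.1 < (Jof 𝓘 P₁ pm pp b).2 ∧ (Jof 𝓘 P₁ pm pp b).2 < xy.2)) := by
    intro b hb
    obtain ⟨hJ, xy, hxyseg, henc, hform⟩ := hspec b hb
    refine ⟨xy, hxyseg, ?_⟩
    have hx12 := hxyseg.2.2.1
    rcases hform with ⟨hy, h1, h2, h3⟩ | ⟨hy, h1, h2, h3⟩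
    · left
      refine ⟨?_, hy, h1, h2, h3⟩
      rw [henc]; unfold enc; rw [if_pos hy]
    · right
      have hnot : ¬ (xy.2 ≤ pm) := by linarith
      refine ⟨?_, hy, h1, h2, h3⟩
      rw [henc]; unfold enc; rw [if_neg hnot]
  -- comparable points give overlapping intervals
  have hov : ∀ b ∈ S, ∀ b' ∈ S, PRel (labF 𝓘 P₁ pm pp) b b' →
      Overlap (Jof 𝓘 P₁ pm pp b) (Jof 𝓘 P₁ pm pp b') := by
    intro b hb b' hb' hrel
    obtain ⟨hlt, hcases⟩ := hrel
    obtain ⟨xy, hxyseg, hform⟩ := hw b hb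
    obtain ⟨xy', hxyseg', hform'⟩ := hw b' hb'
    have hpmb := hbpm b hb
    have hpmb' := hbpm b' hb'
    have hx12 := hxyseg.2.2.1
    have hx12' := hxyseg'.2.2.1
    rcases hform with ⟨hl, hy, hJ2, hJa, hJb⟩ | ⟨hl, hy, hJ1, hJa, hJb⟩ <;>
      rcases hform' with ⟨hl', hy', hJ2', hJa', hJb'⟩ | ⟨hl', hy', hJ1', hJa', hJb'⟩
    · -- left, left
      have hkey : xy.2 < xy'.2 := by
        rcases hcases with ⟨-, hk⟩ | ⟨hf, -⟩
        · rw [hl, hl'] at hk; exact hk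
        · rw [hl] at hf; simp at hf
      have hsep : xy.2 ≤ xy'.1 := by
        by_contra hcon
        push_neg at hcon
        have hmax : max xy.1 xy'.1 < xy.2 := max_lt hx12 hcon
        set w := (max xy.1 xy'.1 + xy.2) / 2 with hwdef
        have hw1 : xy.1 < w := by
          have := le_max_left xy.1 xy'.1; rw [hwdef]; linarith
        have hw2 : w < xy.2 := by rw [hwdef]; linarith
        have hw3 : xy'.1 < w := by
          have := le_max_right xy.1 xy'.1; rw [hwdef]; linarith
        have hw4 : w < xy'.2 := by linarith
        have := seg_eq_of_mem hP1pos hP1lt1 hxyseg hxyseg' hw1 hw2 hw3 hw4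
        linarith [this.2]
      left
      refine ⟨?_, ?_, ?_⟩
      · calc (Jof 𝓘 P₁ pm pp b).1 < xy.2 := hJb
          _ ≤ xy'.1 := hsep
          _ < (Jof 𝓘 P₁ pm pp b').1 := hJa'
      · rw [hJ2]
        calc (Jof 𝓘 P₁ pm pp b').1 < xy'.2 := hJb'
          _ ≤ pm := hy'
          _ < b := hpmb.1
      · rw [hJ2, hJ2']; exact hlt
    · -- left, right : impossible side pattern
      exfalso
      rcases hcases with ⟨hs, -⟩ | ⟨hf, -⟩
      · rw [hl, hl'] at hs; simp at hs
      · rw [hl] at hf; simp at hf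
    · -- right, left : cross
      right
      refine ⟨?_, ?_, ?_⟩
      · rw [hJ1]
        calc (Jof 𝓘 P₁ pm pp b').1 < xy'.2 := hJb'
          _ ≤ pm := hy'
          _ < b := hpmb.1
      · rw [hJ1, hJ2']; exact hlt
      · rw [hJ2']
        calc b' < pp := hpmb'.2
          _ ≤ xy.1 := hy
          _ < (Jof 𝓘 P₁ pm pp b).2 := hJa
    · -- right, right
      have hkey : xy.1 < xy'.1 := by
        rcases hcases with ⟨-, hk⟩ | ⟨-, ht⟩
        · rw [hl, hl'] at hk; exact hk
        · rw [hl'] at ht; simp at ht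
      have hsep : xy.2 ≤ xy'.1 := by
        by_contra hcon
        push_neg at hcon
        have hmax : max xy.1 xy'.1 < min xy.2 xy'.2 := by
          rw [max_lt_iff, lt_min_iff, lt_min_iff]
          exact ⟨⟨hx12, hkey.trans hx12'⟩, hcon, hx12'⟩
        set w := (max xy.1 xy'.1 + min xy.2 xy'.2) / 2 with hwdef
        have hw1 : xy.1 < w := by
          have h1 := le_max_left xy.1 xy'.1; rw [hwdef]; linarith
        have hw2 : w < xy.2 := by
          have h1 := min_le_left xy.2 xy'.2; rw [hwdef]; linarith
        have hw3 : xy'.1 < w := by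
          have h1 := le_max_right xy.1 xy'.1; rw [hwdef]; linarith
        have hw4 : w < xy'.2 := by
          have h1 := min_le_right xy.2 xy'.2; rw [hwdef]; linarith
        have := seg_eq_of_mem hP1pos hP1lt1 hxyseg hxyseg' hw1 hw2 hw3 hw4
        linarith [this.1]
      left
      refine ⟨?_, ?_, ?_⟩
      · rw [hJ1, hJ1']; exact hlt
      · rw [hJ1']
        calc b' < pp := hpmb'.2
          _ ≤ xy.1 := hy
          _ < (Jof 𝓘 P₁ pm pp b).2 := hJa
      · calc (Jof 𝓘 P₁ pm pp b).2 < xy.2 := hJb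
          _ ≤ xy'.1 := hsep
          _ < (Jof 𝓘 P₁ pm pp b').2 := hJa'
  -- build the clique
  rcases S.eq_empty_or_nonempty with rfl | ⟨b0, hb0⟩
  · simp
  have hov_ne : ∀ b ∈ S, ∀ b' ∈ S, b ≠ b' →
      Jof 𝓘 P₁ pm pp b ≠ Jof 𝓘 P₁ pm pp b' := by
    intro b hb b' hb' hne heq
    have hcomp := hpair (Finset.mem_coe.2 hb) (Finset.mem_coe.2 hb') hne
    rcases hcomp with h | h
    · have := hov b hb b' hb' h
      rw [heq] at this
      rcases this with ⟨h1, -, -⟩ | ⟨h1, -, -⟩ <;> exact lt_irrefl _ h1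
    · have := hov b' hb' b hb h
      rw [heq] at this
      rcases this with ⟨h1, -, -⟩ | ⟨h1, -, -⟩ <;> exact lt_irrefl _ h1
  set f : ℝ → {I_2 // I_2 ∈ 𝓘} := fun b =>
    if h : b ∈ S then ⟨Jof 𝓘 P₁ pm pp b, hJ𝓘 b h⟩ else ⟨Jof 𝓘 P₁ pm pp b0, hJ𝓘 b0 hb0⟩
    with hf
  have hfS : ∀ b ∈ S, (f b : ℝ × ℝ) = Jof 𝓘 P₁ pm pp b := by
    intro b hb; rw [hf]; simp only; rw [dif_pos hb]
  set clq : Finset {I_2 // I_2 ∈ 𝓘} := S.image f with hclq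
  have hcard : clq.card = S.card := by
    rw [hclq]
    apply Finset.card_image_of_injOn
    intro a ha b hb hab
    by_contra hne
    apply hov_ne a ha b hb hne
    rw [← hfS a ha, ← hfS b hb, hab]
  have hisclq : (overlapGraph 𝓘).IsClique ↑clq := by
    intro u hu v hv huv
    rw [hclq] at hu hv
    simp only [Finset.coe_image, Set.mem_image, Finset.mem_coe] at hu hv
    obtain ⟨a, ha, rfl⟩ := hu
    obtain ⟨b, hb, rfl⟩ := hv
    have hne : a ≠ b := fun h => huv (by rw [h])
    have hcomp := hpair (Finset.mem_coe.2 ha) (Finset.mem_coe.2 hb) hne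
    show Overlap (f a : ℝ × ℝ) (f b : ℝ × ℝ)
    rw [hfS a ha, hfS b hb]
    rcases hcomp with h | h
    · exact hov a ha b hb h
    · have := hov b hb a ha h
      unfold Overlap at this ⊢
      tauto
  calc S.card = clq.card := hcard.symm
    _ ≤ (overlapGraph 𝓘).cliqueNum :=
        SimpleGraph.IsClique.card_le_cliqueNum (tc := hisclq)

end MainLemmas
section PDegLemma

variable {𝓘 : Finset (ℝ × ℝ)} {P₁ : Finset ℝ} {pm pp : ℝ}

/-- The `P₁`-degree of a piece `(s,t)` is at most the number of labels seen. -/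
lemma pdeg_le_labels (h𝓘 : IsIntervalSystem 𝓘)
    (hP1pos : ∀ q ∈ P₁, 0 < q) (hP1lt1 : ∀ q ∈ P₁, q < 1)
    (hpm0 : 0 ≤ pm) (hpp1 : pp ≤ 1) (hpmpp : pm < pp)
    (hP1gap : ∀ q ∈ P₁, q ≤ pm ∨ pp ≤ q)
    {s t : ℝ} (hpms : pm ≤ s) (htpp : t ≤ pp) (hst : s < t)
    (hgap : ∀ q ∈ P₁, q ≤ s ∨ t ≤ q) :
    PDeg 𝓘 P₁ s t ≤
      (((EptsF 𝓘 P₁ pm pp).filter (fun b => s < b ∧ b < t)).image (labF 𝓘 P₁ pm pp)).card := by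
  classical
  set cnt : Set ((ℝ × ℝ) × (ℝ × ℝ)) := {x : (ℝ × ℝ) × (ℝ × ℝ) |
    IsSegment P₁ x.1.1 x.1.2 ∧ (x.1.2 ≤ s ∨ t ≤ x.1.1) ∧
    IsSegment (P₁ ∪ {s, t}) x.2.1 x.2.2 ∧ s ≤ x.2.1 ∧ x.2.2 ≤ t ∧
    ∃ I ∈ 𝓘,
      (x.1.1 < I.1 ∧ I.1 < x.1.2 ∧ x.2.1 < I.2 ∧ I.2 < x.2.2) ∨
      (x.2.1 < I.1 ∧ I.1 < x.2.2 ∧ x.1.1 < I.2 ∧ I.2 < x.1.2)} with hcnt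
  have hPDeg : PDeg 𝓘 P₁ s t = cnt.ncard := rfl
  -- rigidity: the inner segment is forced to be (s,t)
  have hrig : ∀ x ∈ cnt, x.2.1 = s ∧ x.2.2 = t := by
    intro x hx
    obtain ⟨-, -, hs2, hx21, hx22, -⟩ := hx
    obtain ⟨h21, h22, hlt2, hq2⟩ := hs2
    constructor
    · rcases h21 with h | h
      · rcases Finset.mem_union.1 h with h | h
        · rcases hgap _ h with h' | h'
          · exact le_antisymm h' hx21
          · linarith
        · rcases Finset.mem_insert.1 h with h | h
          · exact h
          · rw [Finset.mem_singleton] at h; linarith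
      · linarith
    · rcases h22 with h | h
      · rcases Finset.mem_union.1 h with h | h
        · rcases hgap _ h with h' | h'
          · linarith
          · exact le_antisymm hx22 h'
        · rcases Finset.mem_insert.1 h with h | h
          · linarith
          · exact Finset.mem_singleton.1 h
      · linarith
  -- the map to labels
  set f : ((ℝ × ℝ) × (ℝ × ℝ)) → Bool × ℝ := fun x => enc pm x.1 with hfdef
  set tfin : Finset (Bool × ℝ) :=
    ((EptsF 𝓘 P₁ pm pp).filter (fun b => s < b ∧ b < t)).image (labF 𝓘 P₁ pm pp) with htfin
  have hmaps : ∀ x ∈ cnt, f x ∈ (↑tfin : Set (Bool × ℝ)) := by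
    intro x hx
    obtain ⟨heq1, heq2⟩ := hrig x hx
    obtain ⟨hseg1, hdisj, hseg2, hx21, hx22, I', hI', hconn⟩ := hx
    rw [heq1, heq2] at hconn
    have hIoo := h𝓘.mem_Ioo I' hI'
    have hx1112 := hseg1.2.2.1
    rcases hconn with ⟨h1, h2, h3, h4⟩ | ⟨h1, h2, h3, h4⟩
    · -- outer endpoint is I'.1, inner is b := I'.2 ∈ (s,t)
      have hleft : x.1.2 ≤ pm := by
        rcases hdisj with hd | hd
        · rcases hseg1.2.1 with h | h
          · rcases hP1gap _ h with h' | h'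
            · exact h'
            · linarith
          · linarith
        · linarith [hIoo.2.1]
      have hspec : LabSpec 𝓘 P₁ pm pp I'.2 (enc pm x.1) I' :=
        ⟨hI', x.1, hseg1, rfl, Or.inl ⟨hleft, rfl, h1, h2⟩⟩
      have hEpt : EptP 𝓘 P₁ pm pp I'.2 :=
        ⟨by linarith, by linarith, ⟨(enc pm x.1, I'), hspec⟩⟩
      refine Finset.mem_coe.2 (Finset.mem_image.2 ⟨I'.2, ?_, ?_⟩)
      · exact Finset.mem_filter.2 ⟨EptsF_mem hEpt, h3, h4⟩
      · rw [hfdef]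
        exact labF_eq h𝓘 hP1pos hP1lt1 hspec
    · -- outer endpoint is I'.2, inner is b := I'.1 ∈ (s,t)
      have hright : pp ≤ x.1.1 := by
        rcases hdisj with hd | hd
        · linarith [hIoo.2.1]
        · rcases hseg1.1 with h | h
          · rcases hP1gap _ h with h' | h'
            · linarith
            · exact h'
          · linarith
      have hspec : LabSpec 𝓘 P₁ pm pp I'.1 (enc pm x.1) I' :=
        ⟨hI', x.1, hseg1, rfl, Or.inr ⟨hright, rfl, h3, h4⟩⟩
      have hEpt : EptP 𝓘 P₁ pm pp I'.1 :=
        ⟨by linarith, by linarith, ⟨(enc pm x.1, I'), hspec⟩⟩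
      refine Finset.mem_coe.2 (Finset.mem_image.2 ⟨I'.1, ?_, ?_⟩)
      · exact Finset.mem_filter.2 ⟨EptsF_mem hEpt, h1, h2⟩
      · rw [hfdef]
        exact labF_eq h𝓘 hP1pos hP1lt1 hspec
  have hinj : Set.InjOn f cnt := by
    intro x hx x' hx' heq
    have hr := hrig x hx
    have hr' := hrig x' hx'
    obtain ⟨hseg1, -, -, -, -, -⟩ := hx
    obtain ⟨hseg1', -, -, -, -, -⟩ := hx'
    have hx1112 := hseg1.2.2.1
    have hx1112' := hseg1'.2.2.1
    have hfst : x.1 = x'.1 := by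
      rw [hfdef] at heq
      simp only at heq
      unfold enc at heq
      by_cases hc : x.1.2 ≤ pm <;> by_cases hc' : x'.1.2 ≤ pm
      · rw [if_pos hc, if_pos hc'] at heq
        have hkey : x.1.2 = x'.1.2 := congrArg (Prod.snd : Bool × ℝ → ℝ) heq
        have hmax : max x.1.1 x'.1.1 < x.1.2 := max_lt hx1112 (hkey ▸ hx1112')
        set w := (max x.1.1 x'.1.1 + x.1.2) / 2 with hwdef
        have hw1 : x.1.1 < w := by
          have := le_max_left x.1.1 x'.1.1; rw [hwdef]; linarith
        have hw2 : w < x.1.2 := by rw [hwdef]; linarith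
        have hw3 : x'.1.1 < w := by
          have := le_max_right x.1.1 x'.1.1; rw [hwdef]; linarith
        have hw4 : w < x'.1.2 := by rw [← hkey]; exact hw2
        have := seg_eq_of_mem hP1pos hP1lt1 hseg1 hseg1' hw1 hw2 hw3 hw4
        exact Prod.ext this.1 this.2
      · rw [if_pos hc, if_neg hc'] at heq
        exact absurd (congrArg (Prod.fst : Bool × ℝ → Bool) heq) (by simp)
      · rw [if_neg hc, if_pos hc'] at heq
        exact absurd (congrArg (Prod.fst : Bool × ℝ → Bool) heq) (by simp)
      · rw [if_neg hc, if_neg hc'] at heq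
        have hkey : x.1.1 = x'.1.1 := congrArg (Prod.snd : Bool × ℝ → ℝ) heq
        have hmin : x.1.1 < min x.1.2 x'.1.2 := by
          rw [lt_min_iff]
          exact ⟨hx1112, hkey ▸ hx1112'⟩
        set w := (x.1.1 + min x.1.2 x'.1.2) / 2 with hwdef
        have hw1 : x.1.1 < w := by rw [hwdef]; linarith
        have hw2 : w < x.1.2 := by
          have := min_le_left x.1.2 x'.1.2; rw [hwdef]; linarith
        have hw3 : x'.1.1 < w := by rw [← hkey]; exact hw1
        have hw4 : w < x'.1.2 := by
          have := min_le_right x.1.2 x'.1.2; rw [hwdef]; linarith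
        have := seg_eq_of_mem hP1pos hP1lt1 hseg1 hseg1' hw1 hw2 hw3 hw4
        exact Prod.ext this.1 this.2
    have hsnd : x.2 = x'.2 := by
      have e1 : x.2 = (s, t) := Prod.ext hr.1 hr.2
      have e2 : x'.2 = (s, t) := Prod.ext hr'.1 hr'.2
      rw [e1, e2]
    exact Prod.ext hfst hsnd
  rw [hPDeg]
  have hle := Set.ncard_le_ncard_of_injOn f hmaps hinj (tfin.finite_toSet)
  rwa [Set.ncard_coe_finset] at hle

end PDegLemma

/-- The key claim: given a pillar assignment of maximum degree at most
`ω + ⌈log₂ ω⌉ + 1` of an interval system of clique number `ω ≥ 2`, a segment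
`S = (p⁻, p⁺)` of `P` containing an interval `I`, and `P₁` the set of pillars
to which intervals with an endpoint in `S` are assigned, there is a set
`P* ⊆ S` of at most `ω² - 1` pillars such that `I` contains a pillar of `P*`
and every segment of `P ∪ P*` contained in `S` has `P₁`-degree at most
`ω + 8`. -/
theorem exists_local_pillars (𝓘 : Finset (ℝ × ℝ)) (h𝓘 : IsIntervalSystem 𝓘)
    (ω : ℕ) (hω2 : 2 ≤ ω) (hω : (overlapGraph 𝓘).cliqueNum = ω)
    (P : Finset ℝ) (r : ℝ → ℕ) (c : ℝ → ℕ)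
    (hPA : IsPillarAssignment 𝓘 P r c)
    (hdeg : MaxDegLE 𝓘 P r (ω + Nat.clog 2 ω + 1))
    (pm pp : ℝ) (hseg : IsSegment P pm pp)
    (I : ℝ × ℝ) (hI : I ∈ 𝓘) (hIin : pm < I.1 ∧ I.2 < pp) :
    ∃ Pstar : Finset ℝ,
      (∀ q ∈ Pstar, pm < q ∧ q < pp ∧ IsPillar 𝓘 q) ∧
      Pstar.card ≤ ω ^ 2 - 1 ∧
      (∃ q ∈ Pstar, I.1 < q ∧ q < I.2) ∧
      ∀ s t : ℝ, IsSegment (P ∪ Pstar) s t → pm ≤ s → t ≤ pp →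
        PDeg 𝓘
          (P.filter (fun p => ∃ I' ∈ 𝓘,
            ((pm < I'.1 ∧ I'.1 < pp) ∨ (pm < I'.2 ∧ I'.2 < pp)) ∧
            AssignedTo P r I' p))
          s t ≤ ω + 8 := by
  classical
  set P₁ : Finset ℝ := P.filter (fun p => ∃ I' ∈ 𝓘,
      ((pm < I'.1 ∧ I'.1 < pp) ∨ (pm < I'.2 ∧ I'.2 < pp)) ∧
      AssignedTo P r I' p) with hP₁def
  have hppos : ∀ q ∈ P, 0 < q := fun q hq => (hPA.pillar q hq).1
  have hplt1 : ∀ q ∈ P, q < 1 := fun q hq => (hPA.pillar q hq).2.1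
  have hP1sub : P₁ ⊆ P := Finset.filter_subset _ _
  have hP1pos : ∀ q ∈ P₁, 0 < q := fun q hq => hppos q (hP1sub hq)
  have hP1lt1 : ∀ q ∈ P₁, q < 1 := fun q hq => hplt1 q (hP1sub hq)
  obtain ⟨hpmP, hppP, hpmpp, hPgap⟩ := hseg
  have hpm0 : 0 ≤ pm := by
    rcases hpmP with h | h
    · exact (hppos pm h).le
    · rw [h]
  have hpp1 : pp ≤ 1 := by
    rcases hppP with h | h
    · exact (hplt1 pp h).le
    · rw [h]
  have hP1gap : ∀ q ∈ P₁, q ≤ pm ∨ pp ≤ q := fun q hq => hPgap q (hP1sub hq)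
  -- cardinality of P₁ via the degree hypothesis
  have hP1card : P₁.card ≤ ω + Nat.clog 2 ω + 1 := by
    have hPrec := hdeg pm pp ⟨hpmP, hppP, hpmpp, hPgap⟩
    unfold PrecDeg at hPrec
    have hsetEq : {p : ℝ | ∃ I_2 ∈ 𝓘,
        ((pm < I_2.1 ∧ I_2.1 < pp) ∨ (pm < I_2.2 ∧ I_2.2 < pp)) ∧ AssignedTo P r I_2 p} =
        (↑P₁ : Set ℝ) := by
      ext p
      constructor
      · rintro ⟨I2, hI2, hcond, hassign⟩
        exact Finset.mem_coe.2 (Finset.mem_filter.2 ⟨hassign.1, ⟨I2, hI2, hcond, hassign⟩⟩)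
      · intro hp
        exact (Finset.mem_filter.1 (Finset.mem_coe.1 hp)).2
    rwa [hsetEq, Set.ncard_coe_finset] at hPrec
  -- label count bound
  have hEcard : (((EptsF 𝓘 P₁ pm pp)).image (labF 𝓘 P₁ pm pp)).card ≤ P₁.card := by
    have hlabP : ∀ l ∈ ((EptsF 𝓘 P₁ pm pp)).image (labF 𝓘 P₁ pm pp),
        l.2 ∈ P₁ ∧ (l.1 = true → l.2 ≤ pm) ∧ (l.1 = false → pp ≤ l.2) := by
      intro l hl
      obtain ⟨b, hb, rfl⟩ := Finset.mem_image.1 hl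
      have hEpt := mem_EptsF hb
      obtain ⟨hJ, xy, hxyseg, henc, hform⟩ := labSpec_choice hEpt.2.2
      have hx12 := hxyseg.2.2.1
      rcases hform with ⟨hy, -, -, -⟩ | ⟨hy, -, -, -⟩
      · have hl2 : labF 𝓘 P₁ pm pp b = (true, xy.2) := by
          rw [henc]; unfold enc; rw [if_pos hy]
        rw [hl2]
        have hmem : xy.2 ∈ P₁ := by
          rcases hxyseg.2.1 with h | h
          · exact h
          · exfalso; rw [h] at hy; linarith
        exact ⟨hmem, fun _ => hy, fun h => by simp at h⟩
      · have hnot : ¬ (xy.2 ≤ pm) := by linarith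
        have hl2 : labF 𝓘 P₁ pm pp b = (false, xy.1) := by
          rw [henc]; unfold enc; rw [if_neg hnot]
        rw [hl2]
        have hmem : xy.1 ∈ P₁ := by
          rcases hxyseg.1 with h | h
          · exact h
          · exfalso; rw [h] at hy; linarith
        exact ⟨hmem, fun h => by simp at h, fun _ => hy⟩
    apply Finset.card_le_card_of_injOn (fun l => l.2)
    · intro l hl; exact (hlabP l hl).1
    · intro l hl l' hl' heq
      simp only at heq
      obtain ⟨-, ht, hf⟩ := hlabP l hl
      obtain ⟨-, ht', hf'⟩ := hlabP l' hl'
      rcases Bool.eq_false_or_eq_true l.1 with hs | hs <;>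
        rcases Bool.eq_false_or_eq_true l'.1 with hs' | hs'
      · exact Prod.ext (hs.trans hs'.symm) heq
      · exfalso
        have h1 := ht hs
        have h2 := hf' hs'
        rw [heq] at h1
        linarith
      · exfalso
        have h1 := hf hs
        have h2 := ht' hs'
        rw [heq] at h1
        linarith
      · exact Prod.ext (hs.trans hs'.symm) heq
  -- chain hypothesis
  have hchainE : ∀ S : Finset ℝ, S ⊆ EptsF 𝓘 P₁ pm pp →
      (↑S : Set ℝ).Pairwise (fun b b' => PRel (labF 𝓘 P₁ pm pp) b b' ∨
        PRel (labF 𝓘 P₁ pm pp) b' b) → S.card ≤ ω := by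
    intro S hS hp
    have := chain_card_le h𝓘 hP1pos hP1lt1 hpmpp S hS hp
    rwa [hω] at this
  set F𝓘 : Finset ℝ := 𝓘.image Prod.fst ∪ 𝓘.image Prod.snd with hF𝓘
  obtain ⟨cuts, hcuts9, hcutsIn, hpiece⟩ :=
    core_cuts (EptsF 𝓘 P₁ pm pp) (labF 𝓘 P₁ pm pp) ω (ω + 8) P₁.card pm pp F𝓘
      le_rfl hEcard (fun b hb => (mem_EptsF hb).1) (fun b hb => (mem_EptsF hb).2.1) hchainE
  have hIoo := h𝓘.mem_Ioo I hI
  obtain ⟨qI, hqI1, hqI2, hqI3⟩ := exists_between_avoid I.1 I.2 (F𝓘 ∪ cuts) hIoo.2.1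
  have hqIF : qI ∉ F𝓘 := fun h => hqI3 (Finset.mem_union_left _ h)
  have hqIc : qI ∉ cuts := fun h => hqI3 (Finset.mem_union_right _ h)
  have hnotEnd : ∀ x : ℝ, x ∉ F𝓘 → ∀ I' ∈ 𝓘, x ≠ I'.1 ∧ x ≠ I'.2 := by
    intro x hx I' hI'
    constructor
    · intro h
      exact hx (Finset.mem_union_left _ (Finset.mem_image.2 ⟨I', hI', h.symm⟩))
    · intro h
      exact hx (Finset.mem_union_right _ (Finset.mem_image.2 ⟨I', hI', h.symm⟩))
  refine ⟨insert qI cuts, ?_, ?_, ?_, ?_⟩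
  · -- pillars in (pm, pp)
    intro q hq
    rcases Finset.mem_insert.1 hq with rfl | hq
    · refine ⟨hIin.1.trans hqI1, hqI2.trans hIin.2, ?_, ?_, hnotEnd q hqIF⟩
      · linarith [hIoo.1]
      · linarith [hIoo.2.2]
    · obtain ⟨h1, h2, h3⟩ := hcutsIn q hq
      exact ⟨h1, h2, by linarith, by linarith, hnotEnd q h3⟩
  · -- cardinality
    have hclog : Nat.clog 2 ω ≤ ω := by
      calc Nat.clog 2 ω ≤ Nat.clog 2 (2 ^ ω) :=
            Nat.clog_mono_right 2 (Nat.lt_two_pow_self (n := ω)).le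
        _ = ω := Nat.clog_pow 2 ω one_lt_two
    have hcard1 : (insert qI cuts).card ≤ cuts.card + 1 := Finset.card_insert_le _ _
    have hP1b : P₁.card ≤ 2 * ω + 1 := by omega
    have hmul : ω * P₁.card ≤ ω * (2 * ω + 1) := Nat.mul_le_mul_left ω hP1b
    have hsq : 2 * ω ≤ ω * ω := Nat.mul_le_mul_right ω hω2
    have hgoal : (insert qI cuts).card + 1 ≤ ω ^ 2 := by
      have hpow : ω ^ 2 = ω * ω := sq ω
      rw [hpow]
      nlinarith [hcuts9, hmul, hsq, hcard1]
    have hpos : 1 ≤ ω ^ 2 := Nat.one_le_pow 2 ω (by omega)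
    omega
  · exact ⟨qI, Finset.mem_insert_self _ _, hqI1, hqI2⟩
  · -- degree of pieces
    intro s t hsegst hpms htpp
    have hst : s < t := hsegst.2.2.1
    have hgapP : ∀ q ∈ P ∪ insert qI cuts, q ≤ s ∨ t ≤ q := hsegst.2.2.2
    have hgap1 : ∀ q ∈ P₁, q ≤ s ∨ t ≤ q :=
      fun q hq => hgapP q (Finset.mem_union_left _ (hP1sub hq))
    have havoid : ∀ x ∈ cuts, x ≤ s ∨ t ≤ x :=
      fun x hx => hgapP x (Finset.mem_union_right _ (Finset.mem_insert_of_mem hx))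
    have h1 := pdeg_le_labels h𝓘 hP1pos hP1lt1 hpm0 hpp1 hpmpp hP1gap hpms htpp hst hgap1
    have h2 := hpiece s t hpms hst havoid
    exact h1.trans h2
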